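/- arXiv:1601.03785 — 9 statements merged into one kernel-verified Lean document; each statement's English description precedes it below -/
import Mathlib

section
/- Let n ≥ 1 and let Γ = (f_1,…,f_n) be a family of weight-functions on [0,1]^n that is invariant under translations, i.e., f_i(x_1+λ,…,x_n+λ) = f_i(x_1,…,x_n) for every i, every λ ∈ [−1,1], and every x ∈ [0,1]^n with (x_1+λ,…,x_n+λ) ∈ [0,1]^n. Then DYOWA_Γ is shift-invariant: DYOWA_Γ(x_1+λ,…,x_n+λ) = DYOWA_Γ(x_1,…,x_n) + λ for all such x and λ. -/
/-- The DYOWA function associated to a family of weight-functions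
`f : Fin n → (Fin n → ℝ) → ℝ`. -/
noncomputable def dyowa {n : ℕ} (f : Fin n → (Fin n → ℝ) → ℝ) (x : Fin n → ℝ) : ℝ :=
  ∑ i, f i x * x i

/-- If the family of weight-functions is invariant under translations, then the
associated DYOWA function is shift-invariant. -/
theorem dyowa_shift_invariant {n : ℕ} (hn : 1 ≤ n)
    (f : Fin n → (Fin n → ℝ) → ℝ)
    (hmem : ∀ (i : Fin n) (x : Fin n → ℝ),
      (∀ j, x j ∈ Set.Icc (0 : ℝ) 1) → f i x ∈ Set.Icc (0 : ℝ) 1)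
    (hsum : ∀ x : Fin n → ℝ, (∀ j, x j ∈ Set.Icc (0 : ℝ) 1) → ∑ i, f i x = 1)
    (hinv : ∀ (i : Fin n) (x : Fin n → ℝ) (lam : ℝ), lam ∈ Set.Icc (-1 : ℝ) 1 →
      (∀ j, x j ∈ Set.Icc (0 : ℝ) 1) → (∀ j, x j + lam ∈ Set.Icc (0 : ℝ) 1) →
      f i (fun j => x j + lam) = f i x)
    (x : Fin n → ℝ) (lam : ℝ) (hlam : lam ∈ Set.Icc (-1 : ℝ) 1)
    (hx : ∀ j, x j ∈ Set.Icc (0 : ℝ) 1)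
    (hx' : ∀ j, x j + lam ∈ Set.Icc (0 : ℝ) 1) :
    dyowa f (fun j => x j + lam) = dyowa f x + lam := by
  unfold dyowa
  have h1 : ∀ i, f i (fun j => x j + lam) = f i x := fun i => hinv i x lam hlam hx hx'
  calc ∑ i, f i (fun j => x j + lam) * (x i + lam)
      = ∑ i, (f i x * x i + f i x * lam) := by
        apply Finset.sum_congr rfl; intro i _; rw [h1 i]; ring
    _ = ∑ i, f i x * x i + (∑ i, f i x) * lam := by
        rw [Finset.sum_add_distrib, ← Finset.sum_mul]
    _ = ∑ i, f i x * x i + lam := by rw [hsum x hx, one_mul]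
end

section
/- Let n ≥ 1, let k be a natural number, and let Γ = (f_1,…,f_n) be a family of weight-functions on [0,1]^n such that each f_i is homogeneous of order k, i.e., f_i(λx_1,…,λx_n) = λ^k · f_i(x_1,…,x_n) for every λ ∈ (0,1] and every x ∈ [0,1]^n. Then DYOWA_Γ is homogeneous of order k+1: DYOWA_Γ(λx_1,…,λx_n) = λ^{k+1} · DYOWA_Γ(x_1,…,x_n) for every λ ∈ [0,1] and every x ∈ [0,1]^n. -/
/-- If each weight-function of the family is homogeneous of order `k`, then the
associated DYOWA function is homogeneous of order `k + 1`. -/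
theorem dyowa_homogeneous {n : ℕ} (hn : 1 ≤ n) (k : ℕ)
    (f : Fin n → (Fin n → ℝ) → ℝ)
    (hmem : ∀ (i : Fin n) (x : Fin n → ℝ),
      (∀ j, x j ∈ Set.Icc (0 : ℝ) 1) → f i x ∈ Set.Icc (0 : ℝ) 1)
    (hsum : ∀ x : Fin n → ℝ, (∀ j, x j ∈ Set.Icc (0 : ℝ) 1) → ∑ i, f i x = 1)
    (hhom : ∀ (i : Fin n) (x : Fin n → ℝ) (lam : ℝ), lam ∈ Set.Ioc (0 : ℝ) 1 →
      (∀ j, x j ∈ Set.Icc (0 : ℝ) 1) →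
      f i (fun j => lam * x j) = lam ^ k * f i x)
    (x : Fin n → ℝ) (hx : ∀ j, x j ∈ Set.Icc (0 : ℝ) 1)
    (lam : ℝ) (hlam : lam ∈ Set.Icc (0 : ℝ) 1) :
    dyowa f (fun j => lam * x j) = lam ^ (k + 1) * dyowa f x := by
  rcases eq_or_lt_of_le hlam.1 with h0 | h0
  · simp [dyowa, ← h0, Finset.mul_sum]
  · unfold dyowa
    rw [Finset.mul_sum]
    refine Finset.sum_congr rfl fun i _ => ?_
    rw [hhom i x lam ⟨h0, hlam.2⟩ hx]
    ring
end

section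
/- For n ≥ 2, the median-based weight functions h_1,…,h_n form a family of weight-functions: for every x ∈ [0,1]^n, each h_i(x) ∈ [0,1] and ∑_{i=1}^n h_i(x) = 1. -/
/-- The median of a vector `x : Fin n → ℝ`, computed from a non-decreasing
rearrangement of `x`. -/
noncomputable def med {n : ℕ} (x : Fin n → ℝ) : ℝ :=
  if hn : 0 < n then
    if n % 2 = 1 then (x ∘ Tuple.sort x) ⟨n / 2, by omega⟩
    else ((x ∘ Tuple.sort x) ⟨n / 2 - 1, by omega⟩ +
            (x ∘ Tuple.sort x) ⟨n / 2, by omega⟩) / 2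
  else 0

open Classical in
/-- The median-based weight functions. -/
noncomputable def hw {n : ℕ} (i : Fin n) (x : Fin n → ℝ) : ℝ :=
  if ∃ c : ℝ, ∀ j, x j = c then 1 / (n : ℝ)
  else (1 / ((n : ℝ) - 1)) * (1 - |x i - med x| / ∑ j, |x j - med x|)

/-- The DYOWA function `H` associated to the median-based weight functions. -/
noncomputable def Hmed {n : ℕ} (x : Fin n → ℝ) : ℝ :=
  ∑ i, hw i x * x i

/-- The median-based weight functions form a family of weight-functions:
each weight lies in `[0,1]` and the weights sum to `1`. -/
theorem hw_is_fwf {n : ℕ} (hn : 2 ≤ n)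
    (x : Fin n → ℝ) (hx : ∀ j, x j ∈ Set.Icc (0 : ℝ) 1) :
    (∀ i : Fin n, hw i x ∈ Set.Icc (0 : ℝ) 1) ∧ ∑ i, hw i x = 1 := by
  have hn1 : (1 : ℝ) ≤ (n : ℝ) - 1 := by
    have : (2 : ℝ) ≤ (n : ℝ) := by exact_mod_cast hn
    linarith
  have hnpos : (0 : ℝ) < (n : ℝ) := by positivity
  by_cases hc : ∃ c : ℝ, ∀ j, x j = c
  · constructor
    · intro i
      simp only [hw, if_pos hc]
      constructor
      · positivity
      · rw [div_le_one hnpos]; linarith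
    · simp only [hw, if_pos hc, Finset.sum_const, Finset.card_univ, Fintype.card_fin,
        nsmul_eq_mul]
      field_simp
  · set S : ℝ := ∑ j, |x j - med x| with hS
    have hSnonneg : 0 ≤ S := Finset.sum_nonneg fun j _ => abs_nonneg _
    have hSpos : 0 < S := by
      rcases lt_or_eq_of_le hSnonneg with h | h
      · exact h
      · exfalso
        apply hc
        refine ⟨med x, fun j => ?_⟩
        have := (Finset.sum_eq_zero_iff_of_nonneg (fun j _ => abs_nonneg (x j - med x))).mp
          h.symm j (Finset.mem_univ j)
        have := abs_eq_zero.mp this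
        linarith
    have hterm : ∀ i : Fin n, |x i - med x| ≤ S := fun i =>
      Finset.single_le_sum (fun j _ => abs_nonneg (x j - med x)) (Finset.mem_univ i)
    constructor
    · intro i
      simp only [hw, if_neg hc, ← hS]
      have h1 : |x i - med x| / S ≤ 1 := by
        rw [div_le_one hSpos]; exact hterm i
      have h0 : 0 ≤ |x i - med x| / S := by positivity
      constructor
      · have : (0:ℝ) < (n:ℝ) - 1 := by linarith
        have : (0:ℝ) ≤ 1 - |x i - med x| / S := by linarith
        positivity
      · have hinv : 1 / ((n:ℝ) - 1) ≤ 1 := by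
          rw [div_le_one (by linarith)]; linarith
        calc 1 / ((n:ℝ) - 1) * (1 - |x i - med x| / S) ≤ 1 / ((n:ℝ) - 1) * 1 := by
              apply mul_le_mul_of_nonneg_left (by linarith) (by positivity)
          _ ≤ 1 := by linarith
    · simp only [hw, if_neg hc, ← hS]
      rw [← Finset.mul_sum]
      have : ∑ i : Fin n, (1 - |x i - med x| / S) = (n : ℝ) - 1 := by
        rw [Finset.sum_sub_distrib, Finset.sum_const, Finset.card_univ, Fintype.card_fin,
          nsmul_eq_mul, mul_one, ← Finset.sum_div, ← hS, div_self (ne_of_gt hSpos)]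
      rw [this, one_div, inv_mul_cancel₀ (by linarith)]
end

section
/- For n ≥ 2, the function H is shift-invariant: for every x ∈ [0,1]^n and every λ ∈ [−1,1] such that (x_1+λ,…,x_n+λ) ∈ [0,1]^n, one has H(x_1+λ,…,x_n+λ) = H(x_1,…,x_n) + λ. -/
/-! The weights `h_i` depend on `x` only through the deviations `x_i - Med x`, and the median
commutes with shifts, so `h_i (x + λ) = h_i x`. Since the weights sum to `1`, it follows that
`H (x + λ) = H x + λ ∑ h_i x = H x + λ`. -/

lemma comp_sort_add_const {n : ℕ} (x : Fin n → ℝ) (c : ℝ) :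
    (fun j => x j + c) ∘ Tuple.sort (fun j => x j + c) = fun k => (x ∘ Tuple.sort x) k + c := by
  have hmono : Monotone ((fun j => x j + c) ∘ Tuple.sort x) :=
    fun _ _ hab => add_le_add_left (Tuple.monotone_sort x hab) c
  exact (Tuple.comp_sort_eq_comp_iff_monotone.2 hmono).symm

lemma med_add_const {n : ℕ} (hn : 0 < n) (x : Fin n → ℝ) (c : ℝ) :
    med (fun j => x j + c) = med x + c := by
  simp only [med, hn, dif_pos, comp_sort_add_const]
  split_ifs <;> ring

lemma exists_forall_add_const_eq_iff {n : ℕ} (x : Fin n → ℝ) (c : ℝ) :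
    (∃ d : ℝ, ∀ j, x j + c = d) ↔ ∃ d : ℝ, ∀ j, x j = d :=
  ⟨fun ⟨d, hd⟩ => ⟨d - c, fun j => eq_sub_of_add_eq (hd j)⟩,
    fun ⟨d, hd⟩ => ⟨d + c, fun j => by rw [hd j]⟩⟩

lemma hw_add_const {n : ℕ} (i : Fin n) (x : Fin n → ℝ) (c : ℝ) :
    hw i (fun j => x j + c) = hw i x := by
  unfold hw
  by_cases hconst : ∃ d : ℝ, ∀ j, x j = d
  · rw [if_pos ((exists_forall_add_const_eq_iff x c).2 hconst), if_pos hconst]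
  · have hn : 0 < n := Nat.pos_of_ne_zero fun h => hconst ⟨0, fun j => (h ▸ j).elim0⟩
    rw [if_neg (mt (exists_forall_add_const_eq_iff x c).1 hconst), if_neg hconst,
      med_add_const hn]
    simp only [add_sub_add_right_eq_sub]

lemma sum_abs_sub_pos_of_not_const {n : ℕ} {x : Fin n → ℝ} (m : ℝ)
    (hconst : ¬∃ d : ℝ, ∀ j, x j = d) : 0 < ∑ j, |x j - m| := by
  refine (Finset.sum_nonneg fun j _ => abs_nonneg _).lt_of_ne fun hzero => hconst ⟨m, fun j => ?_⟩
  have := (Finset.sum_eq_zero_iff_of_nonneg fun j _ => abs_nonneg (x j - m)).1 hzero.symm j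
    (Finset.mem_univ j)
  exact sub_eq_zero.1 (abs_eq_zero.1 this)

lemma sum_hw_eq_one {n : ℕ} (hn : 2 ≤ n) (x : Fin n → ℝ) : ∑ i, hw i x = 1 := by
  have hn' : (2 : ℝ) ≤ n := by exact_mod_cast hn
  unfold hw
  by_cases hconst : ∃ d : ℝ, ∀ j, x j = d
  · simp only [if_pos hconst, Finset.sum_const, Finset.card_univ, Fintype.card_fin, nsmul_eq_mul]
    field_simp
  · have hS := sum_abs_sub_pos_of_not_const (med x) hconst
    simp only [if_neg hconst]
    rw [← Finset.mul_sum, Finset.sum_sub_distrib, ← Finset.sum_div, div_self hS.ne']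
    simp only [Finset.sum_const, Finset.card_univ, Fintype.card_fin, nsmul_eq_mul, mul_one]
    have : (n : ℝ) - 1 ≠ 0 := by linarith
    field_simp

theorem Hmed_shift_invariant_general {n : ℕ} (hn : 2 ≤ n)
    (x : Fin n → ℝ)
    (lam : ℝ) :
    Hmed (fun j => x j + lam) = Hmed x + lam := by
  calc Hmed (fun j => x j + lam)
      = ∑ i, (hw i x * x i + hw i x * lam) := by
        simp only [Hmed, hw_add_const, mul_add]
    _ = Hmed x + lam := by
        rw [Finset.sum_add_distrib, ← Finset.sum_mul, sum_hw_eq_one hn, one_mul, Hmed]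

/-- The function `H` is shift-invariant. -/
theorem Hmed_shift_invariant {n : ℕ} (hn : 2 ≤ n)
    (x : Fin n → ℝ) (hx : ∀ j, x j ∈ Set.Icc (0 : ℝ) 1)
    (lam : ℝ) (hlam : lam ∈ Set.Icc (-1 : ℝ) 1)
    (hx' : ∀ j, x j + lam ∈ Set.Icc (0 : ℝ) 1) :
    Hmed (fun j => x j + lam) = Hmed x + lam :=
  Hmed_shift_invariant_general hn x lam
end

section
/- For n ≥ 2, the function H is homogeneous: for every x ∈ [0,1]^n and every λ ∈ [0,1], one has H(λx_1,…,λx_n) = λ·H(x_1,…,x_n). -/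
/-! Scaling by `lam > 0` preserves the order of the coordinates, so it commutes with the median
and multiplies every deviation `|x i - med x|` by `lam`; the weights, being ratios of such
deviations, are therefore unchanged, and `H` is linear in `x` once the weights are fixed. -/

lemma med_const_mul {n : ℕ} (x : Fin n → ℝ) {lam : ℝ} (hlam : 0 ≤ lam) :
    med (fun j => lam * x j) = lam * med x := by
  have hmono : Monotone ((fun j => lam * x j) ∘ Tuple.sort x) := fun a b hab =>
    mul_le_mul_of_nonneg_left (Tuple.monotone_sort x hab) hlam
  have hsort : ∀ k, lam * x (Tuple.sort (fun j => lam * x j) k) = lam * x (Tuple.sort x k) :=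
    congrFun (Tuple.comp_sort_eq_comp_iff_monotone.2 hmono).symm
  simp only [med, Function.comp_apply, hsort]
  split_ifs <;> ring

lemma exists_forall_const_mul_eq_iff {n : ℕ} (x : Fin n → ℝ) {lam : ℝ} (hlam : lam ≠ 0) :
    (∃ c : ℝ, ∀ j, lam * x j = c) ↔ ∃ c : ℝ, ∀ j, x j = c := by
  constructor
  · rintro ⟨c, hc⟩
    exact ⟨c / lam, fun j => by rw [← hc j, mul_div_cancel_left₀ _ hlam]⟩
  · rintro ⟨c, hc⟩
    exact ⟨lam * c, fun j => by rw [hc j]⟩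

lemma hw_const_mul {n : ℕ} (i : Fin n) (x : Fin n → ℝ) {lam : ℝ} (hlam : 0 < lam) :
    hw i (fun j => lam * x j) = hw i x := by
  have hdev : ∀ j, |lam * x j - med (fun k => lam * x k)| = lam * |x j - med x| := fun j => by
    rw [med_const_mul x hlam.le, ← mul_sub, abs_mul, abs_of_pos hlam]
  simp only [hw, hdev, ← Finset.mul_sum, mul_div_mul_left _ _ hlam.ne']
  classical
  exact if_congr (exists_forall_const_mul_eq_iff x hlam.ne') rfl rfl

theorem Hmed_homogeneous_general {n : ℕ}
    (x : Fin n → ℝ)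
    (lam : ℝ) (hlam : lam ∈ Set.Icc (0 : ℝ) 1) :
    Hmed (fun j => lam * x j) = lam * Hmed x := by
  rcases hlam.1.eq_or_lt with rfl | hpos
  · simp [Hmed]
  · simp only [Hmed, hw_const_mul _ x hpos, Finset.mul_sum]
    exact Finset.sum_congr rfl fun i _ => by ring

/-- The function `H` is homogeneous. -/
theorem Hmed_homogeneous {n : ℕ} (hn : 2 ≤ n)
    (x : Fin n → ℝ) (hx : ∀ j, x j ∈ Set.Icc (0 : ℝ) 1)
    (lam : ℝ) (hlam : lam ∈ Set.Icc (0 : ℝ) 1) :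
    Hmed (fun j => lam * x j) = lam * Hmed x :=
  Hmed_homogeneous_general x lam hlam
end

section
/- Let n ≥ 3, let e, t ∈ [0,1] with t ≠ e, let i be an index, and let x ∈ [0,1]^n be the vector with x_i = t and x_j = e for all j ≠ i. Then H(x) = e. -/
lemma sorted_mid_eq {n : ℕ} (hn : 3 ≤ n) (e t : ℝ) (hte : t ≠ e) (i : Fin n)
    (k : Fin n) (hk0 : 0 < (k : ℕ)) (hk1 : (k : ℕ) < n - 1) :
    (Function.update (fun _ : Fin n => e) i t ∘
      Tuple.sort (Function.update (fun _ : Fin n => e) i t)) k = e := by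
  set x := Function.update (fun _ : Fin n => e) i t with hx
  set σ := Tuple.sort x with hσ
  have hmono : Monotone (x ∘ σ) := Tuple.monotone_sort x
  have hval : ∀ j : Fin n, σ j ≠ i → (x ∘ σ) j = e := by
    intro j hj
    simp [x, Function.update_apply, hj]
  by_cases hk : σ k = i
  · exfalso
    have hm : (⟨(k : ℕ) - 1, by omega⟩ : Fin n) ≤ k := by
      simp [Fin.le_def]
    have hp : k ≤ (⟨(k : ℕ) + 1, by omega⟩ : Fin n) := by
      simp [Fin.le_def]
    have hσm : σ ⟨(k : ℕ) - 1, by omega⟩ ≠ i := by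
      intro h
      have := (Equiv.injective σ) (h.trans hk.symm)
      apply_fun (Fin.val) at this
      simp at this; omega
    have hσp : σ ⟨(k : ℕ) + 1, by omega⟩ ≠ i := by
      intro h
      have := (Equiv.injective σ) (h.trans hk.symm)
      apply_fun (Fin.val) at this
      simp at this
    have h1 := hmono hm
    have h2 := hmono hp
    rw [hval _ hσm] at h1
    rw [hval _ hσp] at h2
    have : (x ∘ σ) k = t := by simp [x, Function.comp, hk]
    rw [this] at h1 h2
    exact hte (le_antisymm h2 h1)
  · exact hval k hk

lemma med_update_const {n : ℕ} (hn : 3 ≤ n) (e t : ℝ) (hte : t ≠ e) (i : Fin n) :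
    med (Function.update (fun _ : Fin n => e) i t) = e := by
  unfold med
  rw [dif_pos (by omega : 0 < n)]
  by_cases h : n % 2 = 1
  · rw [if_pos h]
    exact sorted_mid_eq hn e t hte i _ (by simp; omega) (by simp; omega)
  · rw [if_neg h]
    rw [sorted_mid_eq hn e t hte i _ (by simp; omega) (by simp; omega),
        sorted_mid_eq hn e t hte i _ (by simp; omega) (by simp; omega)]
    ring

/-- For `n ≥ 3`, applying `H` to a vector whose coordinates are all `e`
except for one coordinate equal to `t ≠ e` yields `e`. -/
theorem Hmed_update_const {n : ℕ} (hn : 3 ≤ n)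
    (e t : ℝ) (he : e ∈ Set.Icc (0 : ℝ) 1) (ht : t ∈ Set.Icc (0 : ℝ) 1)
    (hte : t ≠ e) (i : Fin n) :
    Hmed (Function.update (fun _ : Fin n => e) i t) = e := by
  classical
  set x := Function.update (fun _ : Fin n => e) i t with hx
  have hmed : med x = e := med_update_const hn e t hte i
  haveI : Nontrivial (Fin n) := Fin.nontrivial_iff_two_le.mpr (by omega)
  obtain ⟨j, hj⟩ := exists_ne i
  have hnc : ¬ ∃ c : ℝ, ∀ k, x k = c := by
    rintro ⟨c, hc⟩
    have h1 := hc i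
    have h2 := hc j
    simp [x, Function.update_apply, hj] at h1 h2
    exact hte (h1.trans h2.symm)
  have hsum : (∑ k, |x k - med x|) = |t - e| := by
    rw [hmed]
    rw [Finset.sum_eq_single i]
    · simp [x]
    · intro b _ hb; simp [x, Function.update_apply, hb]
    · simp
  have habs : |t - e| ≠ 0 := by
    simp [sub_eq_zero, hte]
  have hwj : ∀ k : Fin n, k ≠ i → hw k x = 1 / ((n : ℝ) - 1) := by
    intro k hk
    rw [hw, if_neg hnc, hsum, hmed]
    have : x k = e := by simp [x, Function.update_apply, hk]
    simp [this]
  have hwi : hw i x = 0 := by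
    rw [hw, if_neg hnc, hsum, hmed]
    have : x i = t := by simp [x]
    rw [this, div_self habs]
    ring
  unfold Hmed
  rw [← Finset.sum_erase_add _ _ (Finset.mem_univ i), hwi, zero_mul, add_zero]
  have : ∀ k ∈ Finset.univ.erase i, hw k x * x k = (1 / ((n : ℝ) - 1)) * e := by
    intro k hk
    have hki : k ≠ i := Finset.ne_of_mem_erase hk
    rw [hwj k hki]
    simp [x, Function.update_apply, hki]
  rw [Finset.sum_congr rfl this, Finset.sum_const]
  rw [Finset.card_erase_of_mem (Finset.mem_univ i), Finset.card_univ, Fintype.card_fin]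
  have hne : (n : ℝ) - 1 ≠ 0 := by
    have : (3:ℝ) ≤ n := by exact_mod_cast hn
    linarith
  have : ((n - 1 : ℕ) : ℝ) = (n : ℝ) - 1 := by
    have : 1 ≤ n := by omega
    push_cast [this]; ring
  rw [nsmul_eq_mul, this]
  field_simp
end

section
/- For n ≥ 2, the function H has no neutral element: there is no e ∈ [0,1] such that for every t ∈ [0,1] and every index i, H applied to the vector whose i-th coordinate is t and whose other coordinates are all e equals t. -/
lemma sum_mul_update_const {ι : Type*} [Fintype ι] [DecidableEq ι] (w : ι → ℝ)
    (hsum : ∑ j, w j = 1) (i : ι) (e t : ℝ) :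
    ∑ j, w j * Function.update (fun _ => e) i t j = e + w i * (t - e) := by
  have h : ∀ j, Function.update (fun _ => e) i t j = e + if j = i then t - e else 0 := by
    intro j
    rw [Function.update_apply]
    split_ifs <;> ring
  simp only [h, mul_add, Finset.sum_add_distrib, ← Finset.sum_mul, hsum, mul_ite, mul_zero,
    Finset.sum_ite_eq', Finset.mem_univ, if_true, one_mul]

lemma two_le_of_not_const {n : ℕ} {x : Fin n → ℝ} (hx : ¬ ∃ c : ℝ, ∀ j, x j = c) : 2 ≤ n := by
  by_contra! h
  have : Subsingleton (Fin n) := Fin.subsingleton_iff_le_one.mpr (by omega)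
  rcases Nat.eq_zero_or_pos n with rfl | hn
  · exact hx ⟨0, fun j => j.elim0⟩
  · exact hx ⟨x ⟨0, hn⟩, fun j => congrArg x (Subsingleton.elim _ _)⟩

lemma sum_abs_sub_ne_zero {n : ℕ} {x : Fin n → ℝ} (hx : ¬ ∃ c : ℝ, ∀ j, x j = c) (m : ℝ) :
    ∑ j, |x j - m| ≠ 0 := by
  intro h
  rw [Finset.sum_eq_zero_iff_of_nonneg fun j _ => abs_nonneg _] at h
  exact hx ⟨m, fun j => sub_eq_zero.mp (abs_eq_zero.mp (h j (Finset.mem_univ j)))⟩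

lemma sum_hw {n : ℕ} (hn : 0 < n) (x : Fin n → ℝ) : ∑ i, hw i x = 1 := by
  by_cases hx : ∃ c : ℝ, ∀ j, x j = c
  · simp only [hw, if_pos hx, Finset.sum_const, Finset.card_univ, Fintype.card_fin, nsmul_eq_mul]
    field_simp
  · have hn1 : (n : ℝ) - 1 ≠ 0 := by
      have : (2 : ℝ) ≤ n := by exact_mod_cast two_le_of_not_const hx
      linarith
    have hS := sum_abs_sub_ne_zero hx (med x)
    simp only [hw, if_neg hx, ← Finset.mul_sum, Finset.sum_sub_distrib, ← Finset.sum_div,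
      Finset.sum_const, Finset.card_univ, Fintype.card_fin, nsmul_eq_mul, mul_one, div_self hS]
    field_simp

lemma hw_le_of_not_const {n : ℕ} {x : Fin n → ℝ} (hx : ¬ ∃ c : ℝ, ∀ j, x j = c) (i : Fin n) :
    hw i x ≤ 1 / ((n : ℝ) - 1) := by
  have : (2 : ℝ) ≤ n := by exact_mod_cast two_le_of_not_const hx
  rw [hw, if_neg hx]
  have hratio : 0 ≤ |x i - med x| / ∑ j, |x j - med x| := by positivity
  exact mul_le_of_le_one_right (one_div_nonneg.mpr (by linarith)) (by linarith)

lemma med_fin_two (x : Fin 2 → ℝ) : med x = (x 0 + x 1) / 2 := by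
  have h := Equiv.sum_comp (Tuple.sort x) x
  simp only [Fin.sum_univ_two] at h
  simp [med, h]

lemma hw_fin_two (x : Fin 2 → ℝ) (i : Fin 2) : hw i x = 1 / 2 := by
  by_cases hx : ∃ c : ℝ, ∀ j, x j = c
  · rw [hw, if_pos hx]
    norm_num
  · have hdev : ∀ j, |x j - med x| = |x 0 - x 1| / 2 := by
      rw [Fin.forall_fin_two, med_fin_two]
      constructor
      · rw [show x 0 - (x 0 + x 1) / 2 = (x 0 - x 1) / 2 by ring, abs_div, abs_two]
      · rw [show x 1 - (x 0 + x 1) / 2 = -((x 0 - x 1) / 2) by ring, abs_neg, abs_div, abs_two]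
    have hS := sum_abs_sub_ne_zero hx (med x)
    simp only [hw, if_neg hx, hdev, Fin.sum_univ_two] at hS ⊢
    have hd : |x 0 - x 1| ≠ 0 := by contrapose! hS; rw [hS]; norm_num
    field_simp
    norm_num

lemma hw_le_half {n : ℕ} (hn : 2 ≤ n) (x : Fin n → ℝ) (i : Fin n) : hw i x ≤ 1 / 2 := by
  by_cases hx : ∃ c : ℝ, ∀ j, x j = c
  · rw [hw, if_pos hx]
    gcongr
    exact_mod_cast hn
  · rcases hn.eq_or_lt with rfl | h3
    · exact (hw_fin_two x i).le
    · have : (3 : ℝ) ≤ n := by exact_mod_cast h3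
      calc hw i x ≤ 1 / ((n : ℝ) - 1) := hw_le_of_not_const hx i
        _ ≤ 1 / 2 := by gcongr; linarith

/-- The function `H` has no neutral element. -/
theorem Hmed_no_neutral_element {n : ℕ} (hn : 2 ≤ n) :
    ¬ ∃ e ∈ Set.Icc (0 : ℝ) 1, ∀ t ∈ Set.Icc (0 : ℝ) 1, ∀ i : Fin n,
      Hmed (Function.update (fun _ : Fin n => e) i t) = t := by
  rintro ⟨e, -, hneutral⟩
  obtain ⟨t, ht, hte⟩ : ∃ t ∈ Set.Icc (0 : ℝ) 1, t ≠ e := by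
    rcases eq_or_ne e 0 with rfl | he
    · exact ⟨1, by simp, one_ne_zero⟩
    · exact ⟨0, by simp, he.symm⟩
  let i : Fin n := ⟨0, by omega⟩
  set x := Function.update (fun _ : Fin n => e) i t
  have hH : e + hw i x * (t - e) = t := by
    rw [← sum_mul_update_const _ (sum_hw (by omega) x)]
    exact hneutral t ht i
  have hw_eq_one : hw i x = 1 := by
    have : (hw i x - 1) * (t - e) = 0 := by linarith
    simpa [sub_eq_zero, hte] using this
  linarith [hw_le_half hn x i]
end

section
/- For n ≥ 2, the function H has no zero divisors: for every x ∈ [0,1]^n with x_j > 0 for all j, one has H(x) > 0. -/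
/-- The function `H` has no zero divisors. -/
theorem Hmed_no_zero_divisors {n : ℕ} (hn : 2 ≤ n)
    (x : Fin n → ℝ) (hx : ∀ j, x j ∈ Set.Icc (0 : ℝ) 1)
    (hpos : ∀ j, 0 < x j) :
    0 < Hmed x := by
  classical
  have hn0 : 0 < n := by omega
  have hne : (Finset.univ : Finset (Fin n)).Nonempty := by
    simpa [Finset.univ_nonempty_iff] using Fin.pos_iff_nonempty.mp hn0
  unfold Hmed
  by_cases hconst : ∃ c : ℝ, ∀ j, x j = c
  · apply Finset.sum_pos
    · intro i _
      have : hw i x = 1 / n := by simp [hw, hconst]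
      rw [this]
      exact mul_pos (by positivity) (hpos i)
    · exact hne
  · -- non-constant case
    set m := med x with hm
    set S := ∑ j, |x j - m| with hS
    have hSnonneg : 0 ≤ S := Finset.sum_nonneg fun j _ => abs_nonneg _
    have hSpos : 0 < S := by
      rcases hSnonneg.lt_or_eq with h | h
      · exact h
      · exfalso
        apply hconst
        refine ⟨m, fun j => ?_⟩
        have := (Finset.sum_eq_zero_iff_of_nonneg
          (fun j _ => abs_nonneg (x j - m))).mp h.symm j (Finset.mem_univ j)
        have : x j - m = 0 := abs_eq_zero.mp this
        linarith
    have hn1 : (1 : ℝ) < (n : ℝ) := by exact_mod_cast hn.trans_lt' (by norm_num)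
    have hterm_le : ∀ i : Fin n, |x i - m| ≤ S := fun i =>
      Finset.single_le_sum (fun j _ => abs_nonneg (x j - m)) (Finset.mem_univ i)
    have hw_nonneg : ∀ i : Fin n, 0 ≤ hw i x := by
      intro i
      have : hw i x = (1 / ((n : ℝ) - 1)) * (1 - |x i - m| / S) := by
        simp [hw, hconst, hm, hS]
      rw [this]
      apply mul_nonneg (le_of_lt (one_div_pos.mpr (by linarith)))
      have : |x i - m| / S ≤ 1 := (div_le_one hSpos).mpr (hterm_le i)
      linarith
    -- find an index with strictly positive weight
    push_neg at hconst
    obtain ⟨a, b, hab⟩ : ∃ a b : Fin n, x a ≠ x b := by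
      by_contra h
      push_neg at h
      rcases hne with ⟨i0, _⟩
      obtain ⟨j, hj⟩ := hconst (x i0)
      exact hj (h j i0)
    have hma : x a ≠ m ∨ x b ≠ m := by
      by_contra h
      push_neg at h
      exact hab (h.1.trans h.2.symm)
    obtain ⟨a, ha⟩ : ∃ a : Fin n, x a ≠ m := by
      rcases hma with h | h
      · exact ⟨a, h⟩
      · exact ⟨b, h⟩
    obtain ⟨i, hia⟩ : ∃ i : Fin n, i ≠ a := by
      have : Nontrivial (Fin n) := Fin.nontrivial_iff_two_le.mpr hn
      exact exists_ne a
    have hlt : |x i - m| < S := by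
      have h1 : |x i - m| + |x a - m| ≤ S := by
        have := Finset.add_sum_erase Finset.univ (fun j => |x j - m|)
          (Finset.mem_univ i)
        have h2 : |x a - m| ≤ ∑ j ∈ Finset.univ.erase i, |x j - m| :=
          Finset.single_le_sum (f := fun j => |x j - m|) (fun j _ => abs_nonneg _)
            (Finset.mem_erase.mpr ⟨Ne.symm hia, Finset.mem_univ a⟩)
        rw [hS, ← this]
        linarith
      have : 0 < |x a - m| := abs_pos.mpr (sub_ne_zero.mpr ha)
      linarith
    apply Finset.sum_pos' (fun j _ => mul_nonneg (hw_nonneg j) (hpos j).le)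
    refine ⟨i, Finset.mem_univ i, ?_⟩
    have hwpos : 0 < hw i x := by
      have heq : hw i x = (1 / ((n : ℝ) - 1)) * (1 - |x i - m| / S) := by
        simp only [hw, hm, hS]
        rw [if_neg (by push_neg; exact hconst)]
      rw [heq]
      apply mul_pos (one_div_pos.mpr (by linarith))
      have : |x i - m| / S < 1 := (div_lt_one hSpos).mpr hlt
      linarith
    exact mul_pos hwpos (hpos i)
end

section
/- For n ≥ 2, the function H has no one divisors: for every x ∈ [0,1]^n with x_j < 1 for all j, one has H(x) < 1. -/
/-- The function `H` has no one divisors. -/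
theorem Hmed_no_one_divisors {n : ℕ} (hn : 2 ≤ n)
    (x : Fin n → ℝ) (hx : ∀ j, x j ∈ Set.Icc (0 : ℝ) 1)
    (hlt : ∀ j, x j < 1) :
    Hmed x < 1 := by
  have hn0 : (0:ℝ) < n := by positivity
  have hn1 : (1:ℝ) < n := by exact_mod_cast lt_of_lt_of_le one_lt_two (by exact_mod_cast hn)
  have i0 : Fin n := ⟨0, by omega⟩
  by_cases hc : ∃ c : ℝ, ∀ j, x j = c
  · obtain ⟨c, hcx⟩ := hc
    have hwi : ∀ i : Fin n, hw i x = 1 / n := by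
      intro i
      unfold hw
      rw [if_pos ⟨c, hcx⟩]
    have : Hmed x = c := by
      unfold Hmed
      simp only [hwi, hcx]
      rw [Finset.sum_const, Finset.card_univ, Fintype.card_fin, nsmul_eq_mul]
      field_simp
    rw [this, ← hcx i0]
    exact hlt i0
  · set m := med x with hm
    set S := ∑ j, |x j - m| with hS
    have hSpos : 0 < S := by
      have : ∃ j, x j ≠ m := by
        by_contra h
        push_neg at h
        exact hc ⟨m, h⟩
      obtain ⟨j, hj⟩ := this
      refine Finset.sum_pos' (fun i _ => abs_nonneg _) ⟨j, Finset.mem_univ j, ?_⟩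
      exact abs_pos.mpr (sub_ne_zero.mpr hj)
    have hwi : ∀ i : Fin n, hw i x = (1 / ((n : ℝ) - 1)) * (1 - |x i - m| / S) := by
      intro i
      unfold hw
      rw [if_neg hc]
    have hterm : ∀ i : Fin n, |x i - m| ≤ S := by
      intro i
      exact Finset.single_le_sum (f := fun j => |x j - m|) (fun j _ => abs_nonneg _) (Finset.mem_univ i)
    have hw_nonneg : ∀ i : Fin n, 0 ≤ hw i x := by
      intro i
      rw [hwi i]
      apply mul_nonneg
      · have h1 : (0:ℝ) < (n:ℝ) - 1 := by linarith
        positivity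
      · have := hterm i
        have : |x i - m| / S ≤ 1 := by
          rw [div_le_one hSpos]; exact this
        linarith
    have hwsum : ∑ i, hw i x = 1 := by
      have : ∑ i, hw i x = (1 / ((n : ℝ) - 1)) * (n - S / S) := by
        simp only [hwi]
        rw [← Finset.mul_sum, Finset.sum_sub_distrib, Finset.sum_const,
          Finset.card_univ, Fintype.card_fin, nsmul_eq_mul, mul_one,
          ← Finset.sum_div]
      rw [this, div_self (ne_of_gt hSpos)]
      rw [one_div, inv_mul_eq_div, div_eq_one_iff_eq (by linarith : (n:ℝ) - 1 ≠ 0)]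
    have hpos : ∃ i : Fin n, 0 < hw i x := by
      by_contra h
      push_neg at h
      have : ∑ i, hw i x ≤ 0 := Finset.sum_nonpos (fun i _ => h i)
      rw [hwsum] at this; linarith
    obtain ⟨k, hk⟩ := hpos
    have : Hmed x < ∑ i, hw i x := by
      unfold Hmed
      apply Finset.sum_lt_sum
      · intro i _
        calc hw i x * x i ≤ hw i x * 1 := by
              apply mul_le_mul_of_nonneg_left (hx i).2 (hw_nonneg i)
          _ = hw i x := mul_one _
      · exact ⟨k, Finset.mem_univ k, by nlinarith [hlt k, hk]⟩
    rw [hwsum] at this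
    exact this
end
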